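/- Let U ⊆ ℝⁿ be open, n ≤ m, f : U → ℝ^m a C^∞ map, and a ∈ U; equip ℝ^m with the standard Euclidean inner product. Then f is a frontal at a if and only if there exist an open neighbourhood V ⊆ U of a and smooth maps ν₁, …, ν_{m−n} : V → ℝ^m such that for every t ∈ V the system ν₁(t), …, ν_{m−n}(t) is orthonormal (⟪νᵢ(t), νⱼ(t)⟫ = δᵢⱼ) and each νᵢ(t) is orthogonal to the range of fderiv ℝ f t, i.e. ⟪νᵢ(t), fderiv ℝ f t (u)⟫ = 0 for all u ∈ ℝⁿ. -/

import Mathlib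

/-!
Near `a`, a smooth frame that is linearly independent at every point can be completed by
constant vectors to a basis of `ℝ^m`, and linear independence persists on a neighbourhood.
Gram–Schmidt is smooth in its input and preserves the span of every initial segment, so it turns
this basis into a smooth orthonormal frame whose first vectors span the same space as the given
frame and whose last vectors span its orthogonal complement. Applied to a tangent frame this yields
the normal fields, applied to the normal fields it yields a tangent frame.
-/

noncomputable section

open Set
open scoped RealInnerProductSpace

/-- A `C^∞` map `f : U → ℝ^m` (with `U ⊆ ℝⁿ` open, `n ≤ m`) is a *frontal* at `a ∈ U` if
on some open neighbourhood `V ⊆ U` of `a` there are smooth maps `h₁, …, h_n : V → ℝ^m`,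
linearly independent at every point of `V`, whose pointwise span contains the range of the
derivative of `f`. -/
def IsFrontalAt (n m : ℕ) (U : Set (EuclideanSpace ℝ (Fin n)))
    (f : EuclideanSpace ℝ (Fin n) → EuclideanSpace ℝ (Fin m))
    (a : EuclideanSpace ℝ (Fin n)) : Prop :=
  ∃ V : Set (EuclideanSpace ℝ (Fin n)), IsOpen V ∧ a ∈ V ∧ V ⊆ U ∧
    ∃ h : Fin n → EuclideanSpace ℝ (Fin n) → EuclideanSpace ℝ (Fin m),
      (∀ i, ContDiffOn ℝ (⊤ : ℕ∞) (h i) V) ∧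
      (∀ t ∈ V, LinearIndependent ℝ (fun i => h i t)) ∧
      (∀ t ∈ V, LinearMap.range (fderiv ℝ f t : EuclideanSpace ℝ (Fin n) →ₗ[ℝ] EuclideanSpace ℝ (Fin m)) ≤
        Submodule.span ℝ (Set.range fun i => h i t))

open InnerProductSpace Module Submodule

section GramSchmidt

variable {𝕜 E : Type*} [RCLike 𝕜] [NormedAddCommGroup E] [InnerProductSpace 𝕜 E]
  {ι : Type*} [LinearOrder ι] [LocallyFiniteOrderBot ι] [WellFoundedLT ι]

theorem span_gramSchmidt_of_isLowerSet (f : ι → E) {s : Set ι} (hs : IsLowerSet s) :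
    span 𝕜 (gramSchmidt 𝕜 f '' s) = span 𝕜 (f '' s) :=
  span_eq_span
    (image_subset_iff.2 fun _ hi =>
      span_mono (image_mono fun _ hj => hs hj hi) (gramSchmidt_mem_span 𝕜 f le_rfl))
    (image_subset_iff.2 fun _ hi =>
      span_mono (image_mono fun _ hj => hs hj hi) (mem_span_gramSchmidt 𝕜 f le_rfl))

theorem span_gramSchmidtNormed_comp_castAdd {k l : ℕ} (f : Fin (k + l) → E) :
    span 𝕜 (range (gramSchmidtNormed 𝕜 f ∘ Fin.castAdd l)) =
      span 𝕜 (range (f ∘ Fin.castAdd l)) := by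
  have hlower : IsLowerSet (range (Fin.castAdd l : Fin k → Fin (k + l))) := by
    rintro _ b hb ⟨i, rfl⟩
    exact ⟨⟨b, lt_of_le_of_lt hb i.isLt⟩, rfl⟩
  rw [range_comp, range_comp, span_gramSchmidtNormed, span_gramSchmidt_of_isLowerSet f hlower]

end GramSchmidt

section Smoothness

variable {F E : Type*} [NormedAddCommGroup F] [NormedSpace ℝ F]
  [NormedAddCommGroup E] [InnerProductSpace ℝ E]
  {ι : Type*} [LinearOrder ι] [LocallyFiniteOrderBot ι] [WellFoundedLT ι]
  {r : WithTop ℕ∞} {s : Set F} {f : F → ι → E}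

theorem contDiffOn_gramSchmidt (hf : ∀ i, ContDiffOn ℝ r (f · i) s)
    (hli : ∀ t ∈ s, LinearIndependent ℝ (f t)) (i : ι) :
    ContDiffOn ℝ r (fun t => gramSchmidt ℝ (f t) i) s := by
  induction i using WellFoundedLT.induction with
  | _ i ih =>
  have hne : ∀ j, ∀ t ∈ s, ‖gramSchmidt ℝ (f t) j‖ ^ 2 ≠ 0 := fun j t ht =>
    pow_ne_zero 2 (norm_ne_zero_iff.2 (gramSchmidt_ne_zero (𝕜 := ℝ) j (hli t ht)))
  have hsum : ContDiffOn ℝ r (fun t => ∑ j ∈ Finset.Iio i,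
      (⟪gramSchmidt ℝ (f t) j, f t i⟫ / ‖gramSchmidt ℝ (f t) j‖ ^ 2) • gramSchmidt ℝ (f t) j) s :=
    ContDiffOn.sum fun j hj =>
      have hj := ih j (Finset.mem_Iio.1 hj)
      ((hj.inner ℝ (hf i)).div (hj.norm_sq ℝ) (hne j)).smul hj
  refine ((hf i).sub hsum).congr fun t _ => eq_sub_of_add_eq ?_
  simpa using (gramSchmidt_def'' ℝ (f t) i).symm

theorem contDiffOn_gramSchmidtNormed (hf : ∀ i, ContDiffOn ℝ r (f · i) s)
    (hli : ∀ t ∈ s, LinearIndependent ℝ (f t)) (i : ι) :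
    ContDiffOn ℝ r (fun t => gramSchmidtNormed ℝ (f t) i) s := by
  have hgs := contDiffOn_gramSchmidt hf hli i
  have hne : ∀ t ∈ s, gramSchmidt ℝ (f t) i ≠ 0 := fun t ht =>
    gramSchmidt_ne_zero (𝕜 := ℝ) i (hli t ht)
  exact ((hgs.norm ℝ hne).inv fun t ht => norm_ne_zero_iff.2 (hne t ht)).smul hgs

end Smoothness

theorem exists_linearIndependent_fin_append {K V : Type*} [DivisionRing K] [AddCommGroup V]
    [Module K V] [FiniteDimensional K V] {k : ℕ} {v : Fin k → V} (hv : LinearIndependent K v) :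
    ∀ {l : ℕ}, k + l ≤ finrank K V → ∃ w : Fin l → V, LinearIndependent K (Fin.append v w)
  | 0, _ => ⟨Fin.elim0, by simpa [Fin.append_elim0] using hv⟩
  | l + 1, hl => by
    obtain ⟨w, hw⟩ := exists_linearIndependent_fin_append hv (l := l) (by omega)
    obtain ⟨x, hx⟩ := exists_linearIndependent_snoc_of_lt_finrank hw (by omega)
    exact ⟨Fin.snoc w x, by rwa [Fin.append_snoc]⟩

theorem Orthonormal.orthogonal_span_comp_castAdd {𝕜 E : Type*} [RCLike 𝕜] [NormedAddCommGroup E]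
    [InnerProductSpace 𝕜 E] [FiniteDimensional 𝕜 E] {k l : ℕ} {e : Fin (k + l) → E}
    (he : Orthonormal 𝕜 e) (hdim : finrank 𝕜 E = k + l) :
    (span 𝕜 (range (e ∘ Fin.castAdd l)))ᗮ = span 𝕜 (range (e ∘ Fin.natAdd k)) := by
  refine (eq_of_le_of_finrank_eq ?_ ?_).symm
  · rw [← isOrtho_iff_le, isOrtho_span]
    rintro _ ⟨j, rfl⟩ _ ⟨i, rfl⟩
    exact he.2 (Fin.ne_of_val_ne (by rw [Fin.val_natAdd, Fin.val_castAdd]; omega))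
  · have hsum := finrank_add_finrank_orthogonal (span 𝕜 (range (e ∘ Fin.castAdd l)))
    rw [finrank_span_eq_card (he.linearIndependent.comp _ (Fin.castAdd_injective k l)), hdim]
      at hsum
    rw [finrank_span_eq_card (he.linearIndependent.comp _ (Fin.natAdd_injective _ _))]
    simp only [Fintype.card_fin] at hsum ⊢
    omega

theorem exists_contDiffOn_orthonormal_frame_extending {F E : Type*} [NormedAddCommGroup F]
    [NormedSpace ℝ F] [NormedAddCommGroup E] [InnerProductSpace ℝ E] [FiniteDimensional ℝ E]
    {r : WithTop ℕ∞} {k l : ℕ} (hdim : finrank ℝ E = k + l) {V : Set F} (hV : IsOpen V)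
    {a : F} (ha : a ∈ V) {c : F → Fin k → E} (hc : ∀ i, ContDiffOn ℝ r (c · i) V)
    (hli : ∀ t ∈ V, LinearIndependent ℝ (c t)) :
    ∃ W ⊆ V, IsOpen W ∧ a ∈ W ∧ ∃ e : F → Fin (k + l) → E,
      (∀ i, ContDiffOn ℝ r (e · i) W) ∧ (∀ t ∈ W, Orthonormal ℝ (e t)) ∧
      ∀ t ∈ W, span ℝ (range (e t ∘ Fin.castAdd l)) = span ℝ (range (c t)) := by
  obtain ⟨w, hw⟩ := exists_linearIndependent_fin_append (hli a ha) hdim.ge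
  set G : F → Fin (k + l) → E := fun t => Fin.append (c t) w
  have hG : ∀ i, ContDiffOn ℝ r (G · i) V :=
    Fin.addCases (by simpa [G] using hc) (by simp [G, contDiffOn_const])
  set W := V ∩ G ⁻¹' {g | LinearIndependent ℝ g}
  have hW : IsOpen W := (continuousOn_pi.2 fun i => (hG i).continuousOn).isOpen_inter_preimage
    hV isOpen_setOfPred_linearIndependent
  refine ⟨W, inter_subset_left, hW, ⟨ha, hw⟩, fun t => gramSchmidtNormed ℝ (G t),
    contDiffOn_gramSchmidtNormed (fun j => (hG j).mono inter_subset_left) fun t ht => ht.2,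
    fun t ht => gramSchmidtNormed_orthonormal ht.2, fun t _ => ?_⟩
  rw [span_gramSchmidtNormed_comp_castAdd]
  simp [G, Function.comp_def]

theorem isFrontalAt_iff_exists_orthonormal_normal_fields_general
    (n m : ℕ) (hnm : n ≤ m)
    (U : Set (EuclideanSpace ℝ (Fin n)))
    (f : EuclideanSpace ℝ (Fin n) → EuclideanSpace ℝ (Fin m))
    (a : EuclideanSpace ℝ (Fin n)) :
    IsFrontalAt n m U f a ↔
      ∃ V : Set (EuclideanSpace ℝ (Fin n)), IsOpen V ∧ a ∈ V ∧ V ⊆ U ∧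
        ∃ ν : Fin (m - n) → EuclideanSpace ℝ (Fin n) → EuclideanSpace ℝ (Fin m),
          (∀ i, ContDiffOn ℝ (⊤ : ℕ∞) (ν i) V) ∧
          (∀ t ∈ V, Orthonormal ℝ (fun i => ν i t)) ∧
          (∀ t ∈ V, ∀ i, ∀ u : EuclideanSpace ℝ (Fin n),
            ⟪ν i t, fderiv ℝ f t u⟫ = 0) := by
  have hdim : finrank ℝ (EuclideanSpace ℝ (Fin m)) = n + (m - n) := by
    rw [finrank_euclideanSpace_fin]; omega
  constructor
  · rintro ⟨V, hV, haV, hVU, h, hh, hli, hrange⟩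
    obtain ⟨W, hWV, hW, haW, e, he, hon, hspan⟩ := exists_contDiffOn_orthonormal_frame_extending
      (c := fun t i => h i t) hdim hV haV hh hli
    refine ⟨W, hW, haW, hWV.trans hVU, fun j t => e t (Fin.natAdd n j), fun j => he _,
      fun t ht => (hon t ht).comp _ (Fin.natAdd_injective _ _), fun t ht j u => ?_⟩
    have hnormal : e t (Fin.natAdd n j) ∈ (span ℝ (range fun i => h i t))ᗮ := by
      rw [← hspan t ht, (hon t ht).orthogonal_span_comp_castAdd hdim]
      exact subset_span ⟨j, rfl⟩
    exact inner_left_of_mem_orthogonal (hrange t (hWV ht) (LinearMap.mem_range_self _ u)) hnormal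
  · rintro ⟨V, hV, haV, hVU, ν, hν, hon, hnormal⟩
    obtain ⟨W, hWV, hW, haW, e, he, heon, hspan⟩ := exists_contDiffOn_orthonormal_frame_extending
      (c := fun t i => ν i t) (hdim.trans (add_comm _ _)) hV haV hν
      fun t ht => (hon t ht).linearIndependent
    refine ⟨W, hW, haW, hWV.trans hVU, fun j t => e t (Fin.natAdd (m - n) j), fun j => he _,
      fun t ht => ((heon t ht).comp _ (Fin.natAdd_injective _ _)).linearIndependent, ?_⟩
    rintro t ht _ ⟨u, rfl⟩
    have hperp : fderiv ℝ f t u ∈ (span ℝ (range fun i => ν i t))ᗮ :=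
      (span_singleton_le_iff_mem _ _).1 <| isOrtho_iff_le.1 <| isOrtho_span.2 <| by
        rintro _ rfl _ ⟨i, rfl⟩
        rw [real_inner_comm]
        exact hnormal t (hWV ht) i u
    rwa [← hspan t ht, (heon t ht).orthogonal_span_comp_castAdd (hdim.trans (add_comm _ _))]
      at hperp

/-- Euclidean characterisation of frontals by orthonormal normal fields.
`f : U → ℝ^m` (`U ⊆ ℝⁿ` open, `n ≤ m`) is a frontal at `a ∈ U` if and only if there exist an
open neighbourhood `V ⊆ U` of `a` and smooth maps `ν₁, …, ν_{m−n} : V → ℝ^m` such that for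
every `t ∈ V` the system `ν₁(t), …, ν_{m−n}(t)` is orthonormal and each `νᵢ(t)` is
orthogonal to the range of `fderiv ℝ f t`.  (Euclidean case of Lemma 7.3 of the paper.) -/
theorem isFrontalAt_iff_exists_orthonormal_normal_fields
    (n m : ℕ) (hnm : n ≤ m)
    (U : Set (EuclideanSpace ℝ (Fin n))) (hU : IsOpen U)
    (f : EuclideanSpace ℝ (Fin n) → EuclideanSpace ℝ (Fin m))
    (hf : ContDiffOn ℝ (⊤ : ℕ∞) f U)
    (a : EuclideanSpace ℝ (Fin n)) (ha : a ∈ U) :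
    IsFrontalAt n m U f a ↔
      ∃ V : Set (EuclideanSpace ℝ (Fin n)), IsOpen V ∧ a ∈ V ∧ V ⊆ U ∧
        ∃ ν : Fin (m - n) → EuclideanSpace ℝ (Fin n) → EuclideanSpace ℝ (Fin m),
          (∀ i, ContDiffOn ℝ (⊤ : ℕ∞) (ν i) V) ∧
          (∀ t ∈ V, Orthonormal ℝ (fun i => ν i t)) ∧
          (∀ t ∈ V, ∀ i, ∀ u : EuclideanSpace ℝ (Fin n),
            ⟪ν i t, fderiv ℝ f t u⟫ = 0) :=
  isFrontalAt_iff_exists_orthonormal_normal_fields_general n m hnm U f a
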